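/- For k = 1, 2 let θ_k = (τ_{Z,k}, φ_{Z,k}, φ_{U,k}, ρ_k) be real parameters with τ_{Z,k} > 0, |φ_{Z,k}| < 1, |φ_{U,k}| < 1, ρ_k > 0, and φ_{U,k} ≠ 0, and define the lag function p_k : ℕ → ℝ by p_k(0) = τ_{Z,k}·[2 − 2ρ_k²/√(1−φ_{U,k}²)], p_k(1) = τ_{Z,k}·[−φ_{Z,k} − 2ρ_k²·φ_{U,k}/(√(1−φ_{U,k}²)·(1+√(1−φ_{U,k}²)))], and p_k(l) = −2·τ_{Z,k}·ρ_k²·φ_{U,k}^l/(√(1−φ_{U,k}²)·(1+√(1−φ_{U,k}²))^l) for l ≥ 2. If p_1(l) = p_2(l) for all l ∈ ℕ, then τ_{Z,1} = τ_{Z,2}, φ_{Z,1} = φ_{Z,2}, φ_{U,1} = φ_{U,2}, and ρ_1 = ρ_2. -/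

import Mathlib

/-!
For `l ≥ 2` the lag function is a geometric sequence `c · r ^ l` with scale
`c = -2 τ_Z ρ² / √(1 - φ_U²)` and ratio `r = φ_U / (1 + √(1 - φ_U²))`; since `c r ≠ 0`,
the lags `2` and `3` determine `c` and `r`. The ratio is inverted by `φ_U = 2r / (1 + r²)`,
lag `0` equals `2 τ_Z + c` and lag `1` equals `-τ_Z φ_Z + c r`; these recover `φ_U`, `τ_Z`
and `φ_Z` in turn, and then `c` recovers `ρ`.
-/

/-- The limiting value, as ring size `n → ∞`, of the entries at lag `l = |i - j|` of the
marginal precision matrix `τ_Z • (A_n(φ_Z) - 4ρ² • A_n(φ_U)⁻¹)` of the exposure. -/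
noncomputable def lagPrec (τZ φZ φU ρ : ℝ) : ℕ → ℝ := fun l =>
  if l = 0 then
    τZ * (2 - 2 * ρ ^ 2 / Real.sqrt (1 - φU ^ 2))
  else if l = 1 then
    τZ * (-φZ - 2 * ρ ^ 2 * φU /
      (Real.sqrt (1 - φU ^ 2) * (1 + Real.sqrt (1 - φU ^ 2))))
  else
    -2 * τZ * ρ ^ 2 * φU ^ l /
      (Real.sqrt (1 - φU ^ 2) * (1 + Real.sqrt (1 - φU ^ 2)) ^ l)

open Real

theorem eq_and_eq_of_mul_pow_eq_of_mul_pow_succ_eq {K : Type*} [Field K] {a b r q : K} {n : ℕ}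
    (hne : a * r ^ n ≠ 0) (hn : a * r ^ n = b * q ^ n)
    (hsucc : a * r ^ (n + 1) = b * q ^ (n + 1)) : a = b ∧ r = q := by
  have hr : r = q := by
    refine mul_right_cancel₀ hne ?_
    calc r * (a * r ^ n) = a * r ^ (n + 1) := by ring
      _ = b * q ^ (n + 1) := hsucc
      _ = q * (a * r ^ n) := by rw [hn]; ring
  subst hr
  exact ⟨mul_right_cancel₀ (right_ne_zero_of_mul hne) hn, rfl⟩

noncomputable def lagScale (τZ φU ρ : ℝ) : ℝ := -2 * τZ * ρ ^ 2 / √(1 - φU ^ 2)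

noncomputable def lagRatio (φU : ℝ) : ℝ := φU / (1 + √(1 - φU ^ 2))

section LagPrec

variable (τZ φZ φU ρ : ℝ)

theorem lagPrec_zero : lagPrec τZ φZ φU ρ 0 = 2 * τZ + lagScale τZ φU ρ := by
  simp only [lagPrec, lagScale, if_pos]
  ring

theorem lagPrec_one :
    lagPrec τZ φZ φU ρ 1 = -τZ * φZ + lagScale τZ φU ρ * lagRatio φU := by
  simp only [lagPrec, lagScale, lagRatio, one_ne_zero, if_false, if_pos, div_eq_mul_inv,
    mul_inv]
  ring

theorem lagPrec_of_two_le {l : ℕ} (hl : 2 ≤ l) :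
    lagPrec τZ φZ φU ρ l = lagScale τZ φU ρ * lagRatio φU ^ l := by
  simp only [lagPrec, lagScale, lagRatio, if_neg (by omega : l ≠ 0), if_neg (by omega : l ≠ 1),
    div_pow]
  ring

end LagPrec

theorem sqrt_one_sub_sq_pos {φ : ℝ} (hφ : |φ| < 1) : 0 < √(1 - φ ^ 2) := by
  rw [Real.sqrt_pos, sub_pos, ← sq_abs]
  exact pow_lt_one₀ (abs_nonneg φ) hφ two_ne_zero

theorem lagScale_neg {τZ φU ρ : ℝ} (hτZ : 0 < τZ) (hφU : |φU| < 1) (hρ : ρ ≠ 0) :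
    lagScale τZ φU ρ < 0 := by
  have : 0 < τZ * ρ ^ 2 := by positivity
  exact div_neg_of_neg_of_pos (by linarith) (sqrt_one_sub_sq_pos hφU)

theorem lagScale_injOn {τZ φU : ℝ} (hτZ : τZ ≠ 0) (hφU : |φU| < 1) :
    Set.InjOn (lagScale τZ φU) (Set.Ici 0) := by
  intro ρ₁ hρ₁ ρ₂ hρ₂ h
  have hs := (sqrt_one_sub_sq_pos hφU).ne'
  unfold lagScale at h
  rw [div_left_inj' hs] at h
  refine (pow_left_inj₀ hρ₁ hρ₂ two_ne_zero).1 ?_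
  simpa [mul_assoc, hτZ] using h

theorem lagRatio_ne_zero {φU : ℝ} (hφU : φU ≠ 0) : lagRatio φU ≠ 0 :=
  div_ne_zero hφU (by positivity)

theorem two_mul_lagRatio_div {φU : ℝ} (hφU : |φU| < 1) :
    2 * lagRatio φU / (1 + lagRatio φU ^ 2) = φU := by
  have hs := sqrt_one_sub_sq_pos hφU
  have hsq : √(1 - φU ^ 2) ^ 2 = 1 - φU ^ 2 := Real.sq_sqrt (Real.sqrt_pos.1 hs).le
  unfold lagRatio
  field_simp
  linear_combination (-φU) * hsq

theorem lagRatio_injOn : Set.InjOn lagRatio {φ | |φ| < 1} := fun φ₁ h₁ φ₂ h₂ h => by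
  rw [← two_mul_lagRatio_div h₁, ← two_mul_lagRatio_div h₂, h]

theorem parameters_identified_from_exposure_general
    (τZ1 φZ1 φU1 ρ1 τZ2 φZ2 φU2 ρ2 : ℝ)
    (hτZ1 : 0 < τZ1) (hφU1 : |φU1| < 1) (hρ1 : 0 < ρ1) (hU1 : φU1 ≠ 0)
    (hφU2 : |φU2| < 1) (hρ2 : 0 < ρ2)
    (heq : ∀ l : ℕ, lagPrec τZ1 φZ1 φU1 ρ1 l = lagPrec τZ2 φZ2 φU2 ρ2 l) :
    τZ1 = τZ2 ∧ φZ1 = φZ2 ∧ φU1 = φU2 ∧ ρ1 = ρ2 := by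
  have hgeom (l : ℕ) (hl : 2 ≤ l) :
      lagScale τZ1 φU1 ρ1 * lagRatio φU1 ^ l = lagScale τZ2 φU2 ρ2 * lagRatio φU2 ^ l := by
    rw [← lagPrec_of_two_le _ φZ1 _ _ hl, ← lagPrec_of_two_le _ φZ2 _ _ hl, heq]
  have hne : lagScale τZ1 φU1 ρ1 * lagRatio φU1 ^ 2 ≠ 0 :=
    mul_ne_zero (lagScale_neg hτZ1 hφU1 hρ1.ne').ne (pow_ne_zero 2 (lagRatio_ne_zero hU1))
  obtain ⟨hc, hr⟩ :=
    eq_and_eq_of_mul_pow_eq_of_mul_pow_succ_eq hne (hgeom 2 le_rfl) (hgeom 3 (by norm_num))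
  have hφU : φU1 = φU2 := lagRatio_injOn hφU1 hφU2 hr
  have hτZ : τZ1 = τZ2 := by
    have h0 := heq 0
    rw [lagPrec_zero, lagPrec_zero, hc] at h0
    linarith
  subst hφU hτZ
  refine ⟨rfl, ?_, rfl, lagScale_injOn hτZ1.ne' hφU1 hρ1.le hρ2.le hc⟩
  have h1 := heq 1
  rw [lagPrec_one, lagPrec_one, hc, add_left_inj, neg_mul, neg_mul, neg_inj] at h1
  exact mul_left_cancel₀ hτZ1.ne' h1

/-- Second assertion of Theorem 1: when `ρ > 0` and `φ_U ≠ 0`, the parameters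
`(τ_Z, φ_Z, φ_U, ρ)` are identified by the limiting precision of the exposure process. -/
theorem parameters_identified_from_exposure
    (τZ1 φZ1 φU1 ρ1 τZ2 φZ2 φU2 ρ2 : ℝ)
    (hτZ1 : 0 < τZ1) (hφZ1 : |φZ1| < 1) (hφU1 : |φU1| < 1) (hρ1 : 0 < ρ1) (hU1 : φU1 ≠ 0)
    (hτZ2 : 0 < τZ2) (hφZ2 : |φZ2| < 1) (hφU2 : |φU2| < 1) (hρ2 : 0 < ρ2) (hU2 : φU2 ≠ 0)
    (heq : ∀ l : ℕ, lagPrec τZ1 φZ1 φU1 ρ1 l = lagPrec τZ2 φZ2 φU2 ρ2 l) :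
    τZ1 = τZ2 ∧ φZ1 = φZ2 ∧ φU1 = φU2 ∧ ρ1 = ρ2 :=
  parameters_identified_from_exposure_general τZ1 φZ1 φU1 ρ1 τZ2 φZ2 φU2 ρ2 hτZ1 hφU1 hρ1 hU1 hφU2
    hρ2 heq
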